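/- Applying the Verlinde formula to the gauged modular data S^eq for labels (X,ε), (Ẑ₁,ε₁), (Ẑ₂,ε₂) gives N_{(X,ε),(Ẑ₁,ε₁),(Ẑ₂,ε₂)} = ½ Σ_{W∈I} S_{XW}² S_{Z₁W} S_{Z₂W} / S_{0W}² + ½ ε ε₁ ε₂ Σ_{W∈I} S_{XW} P_{Z₁W} P_{Z₂W} / S_{0W}, where S = S'/δ is the normalized S-matrix and P := η^{-1} T^{1/2} S T² S T^{1/2} is Bantay's P-matrix. -/

import Mathlib

/-- Gauged labels of the ℤ/2 permutation gauging: unordered pairs `(XY)` with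
`X ≠ Y` (modelled as pairs with `X < Y`), labels `(X,ε)`, and labels `(X̂,ε)`. -/
abbrev GLabel (I : Type) [LinearOrder I] : Type :=
  {p : I × I // p.1 < p.2} ⊕ (I × Bool) ⊕ (I × Bool)

/-- The sign `ε ∈ {+1, -1}` as a complex number. -/
def sg (ε : Bool) : ℂ := if ε then 1 else -1

/-- The gauged S-matrix `S^eq`, defined blockwise from modular data
`(S', θ)`, a choice of square roots `θ^{1/2}`, `δ = √μ` and `η = p⁺/δ`. -/
noncomputable def gaugedS {I : Type} [LinearOrder I] [Fintype I]
    (S : Matrix I I ℂ) (θ sqrtθ : I → ℂ) (δ η : ℂ) :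
    Matrix (GLabel I) (GLabel I) ℂ :=
  Matrix.of fun a b =>
    match a, b with
    | Sum.inl p, Sum.inl q =>
        2 * (S p.1.1 q.1.1 * S p.1.2 q.1.2 + S p.1.1 q.1.2 * S p.1.2 q.1.1)
    | Sum.inl p, Sum.inr (Sum.inl (Z, _)) => 2 * S p.1.1 Z * S p.1.2 Z
    | Sum.inr (Sum.inl (X, _)), Sum.inl q => 2 * S X q.1.1 * S X q.1.2
    | Sum.inl _, Sum.inr (Sum.inr _) => 0
    | Sum.inr (Sum.inr _), Sum.inl _ => 0
    | Sum.inr (Sum.inl (X, _)), Sum.inr (Sum.inl (Y, _)) => (S X Y) ^ 2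
    | Sum.inr (Sum.inl (X, ε₁)), Sum.inr (Sum.inr (Y, _)) => sg ε₁ * δ * S X Y
    | Sum.inr (Sum.inr (X, _)), Sum.inr (Sum.inl (Y, ε₂)) => sg ε₂ * δ * S Y X
    | Sum.inr (Sum.inr (X, ε₁)), Sum.inr (Sum.inr (Y, ε₂)) =>
        sg ε₁ * sg ε₂ * η⁻¹ * sqrtθ X * sqrtθ Y * (∑ V, S X V * θ V ^ 2 * S V Y)

/-- Bantay's P-matrix `P = η⁻¹ T^{1/2} S T² S T^{1/2}` built from the normalized
S-matrix `S = S'/δ`. -/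
noncomputable def bantayP {I : Type} [Fintype I]
    (S : Matrix I I ℂ) (θ sqrtθ : I → ℂ) (δ η : ℂ) : I → I → ℂ :=
  fun Z W => η⁻¹ * sqrtθ Z * (∑ V, (S Z V / δ) * θ V ^ 2 * (S V W / δ)) * sqrtθ W

/-!
Only the labels `(W, ±)` and `(Ŵ, ±)` contribute to the sum, because the twisted rows of `S^eq`
vanish on the pair labels `(XY)`. The two signs of such a label contribute equally, as the sign
enters squared, which turns `1 / (2μ)²` into the factor `½`. Since `S^eq_{(Ŵ,±),(1,+)} = δ S_{0W}`,
what remains for each `W` is an identity of rational expressions in the entries of `S` that holds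
without cancelling any factor.
-/

noncomputable def verlindeSummand {L : Type} (M : Matrix L L ℂ) (D : ℂ) (u a b c ℓ : L) : ℂ :=
  M a ℓ * M b ℓ * M c ℓ / (D * M ℓ u)

theorem sg_true : sg true = 1 := rfl

theorem sg_false : sg false = -1 := rfl

theorem bantayP_eq {I : Type} [Fintype I] (S : Matrix I I ℂ) (θ sqrtθ : I → ℂ) (δ η : ℂ)
    (Z W : I) :
    bantayP S θ sqrtθ δ η Z W =
      η⁻¹ * sqrtθ Z * sqrtθ W * (∑ V, S Z V * θ V ^ 2 * S V W) / δ ^ 2 := by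
  have hsum : ∑ V, S Z V / δ * θ V ^ 2 * (S V W / δ) =
      (∑ V, S Z V * θ V ^ 2 * S V W) / δ ^ 2 := by
    rw [Finset.sum_div]
    exact Finset.sum_congr rfl fun V _ => by ring
  rw [bantayP, hsum]
  ring

section GaugedVerlinde

variable {I : Type} [LinearOrder I] [Fintype I]
  {S : Matrix I I ℂ} {θ sqrtθ : I → ℂ} {δ η : ℂ}

local notation "Seq" => gaugedS S θ sqrtθ δ η

theorem verlindeSummand_hat_pair (D : ℂ) (u a : GLabel I) (Z₁ Z₂ : I) (ε₁ ε₂ : Bool)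
    (p : {p : I × I // p.1 < p.2}) :
    verlindeSummand Seq D u a (Sum.inr (Sum.inr (Z₁, ε₁))) (Sum.inr (Sum.inr (Z₂, ε₂)))
      (Sum.inl p) = 0 := by
  simp [verlindeSummand, gaugedS]

theorem sum_verlindeSummand_untwisted (hS : S.IsSymm) (one X Z₁ Z₂ W : I) (ε ε₁ ε₂ : Bool) :
    ∑ ε', verlindeSummand Seq ((2 * δ ^ 2) ^ 2) (Sum.inr (Sum.inl (one, true)))
        (Sum.inr (Sum.inl (X, ε))) (Sum.inr (Sum.inr (Z₁, ε₁))) (Sum.inr (Sum.inr (Z₂, ε₂)))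
        (Sum.inr (Sum.inl (W, ε'))) =
      (S X W / δ) ^ 2 * (S Z₁ W / δ) * (S Z₂ W / δ) / (S one W / δ) ^ 2 / 2 := by
  simp only [verlindeSummand, gaugedS, Matrix.of_apply, Fintype.sum_bool,
    hS.apply W Z₁, hS.apply W Z₂, hS.apply W one, sg_true, sg_false, div_pow,
    div_div_eq_mul_div]
  ring

theorem sum_verlindeSummand_twisted (one X Z₁ Z₂ W : I) (ε ε₁ ε₂ : Bool) :
    ∑ ε', verlindeSummand Seq ((2 * δ ^ 2) ^ 2) (Sum.inr (Sum.inl (one, true)))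
        (Sum.inr (Sum.inl (X, ε))) (Sum.inr (Sum.inr (Z₁, ε₁))) (Sum.inr (Sum.inr (Z₂, ε₂)))
        (Sum.inr (Sum.inr (W, ε'))) =
      sg ε * sg ε₁ * sg ε₂ *
        ((S X W / δ) * bantayP S θ sqrtθ δ η Z₁ W * bantayP S θ sqrtθ δ η Z₂ W /
          (S one W / δ)) / 2 := by
  simp only [verlindeSummand, gaugedS, Matrix.of_apply, Fintype.sum_bool, bantayP_eq,
    sg_true, sg_false, div_div_eq_mul_div]
  ring

end GaugedVerlinde

theorem gauged_verlinde_diag_hat_general {I : Type} [LinearOrder I] [Fintype I]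
    (one : I) (S : Matrix I I ℂ) (δ : ℝ)
    (θ sqrtθ : I → ℂ) (η : ℂ)
    (hSsymm : S.IsSymm) :
    ∀ (X Z₁ Z₂ : I) (ε ε₁ ε₂ : Bool),
      ∑ ℓ : GLabel I,
          gaugedS S θ sqrtθ (δ : ℂ) η (Sum.inr (Sum.inl (X, ε))) ℓ *
          gaugedS S θ sqrtθ (δ : ℂ) η (Sum.inr (Sum.inr (Z₁, ε₁))) ℓ *
          gaugedS S θ sqrtθ (δ : ℂ) η (Sum.inr (Sum.inr (Z₂, ε₂))) ℓ /
          ((2 * (δ : ℂ) ^ 2) ^ 2 *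
            gaugedS S θ sqrtθ (δ : ℂ) η ℓ (Sum.inr (Sum.inl (one, true))))
      = (∑ W, (S X W / (δ : ℂ)) ^ 2 * (S Z₁ W / (δ : ℂ)) * (S Z₂ W / (δ : ℂ)) /
            (S one W / (δ : ℂ)) ^ 2) / 2
        + sg ε * sg ε₁ * sg ε₂ *
          (∑ W, (S X W / (δ : ℂ)) * bantayP S θ sqrtθ (δ : ℂ) η Z₁ W *
            bantayP S θ sqrtθ (δ : ℂ) η Z₂ W / (S one W / (δ : ℂ))) / 2 := by
  intro X Z₁ Z₂ ε ε₁ ε₂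
  change ∑ ℓ, verlindeSummand (gaugedS S θ sqrtθ δ η) ((2 * (δ : ℂ) ^ 2) ^ 2)
    (Sum.inr (Sum.inl (one, true))) (Sum.inr (Sum.inl (X, ε))) (Sum.inr (Sum.inr (Z₁, ε₁)))
    (Sum.inr (Sum.inr (Z₂, ε₂))) ℓ = _
  rw [Fintype.sum_sum_type, Fintype.sum_sum_type, Fintype.sum_prod_type, Fintype.sum_prod_type]
  simp only [verlindeSummand_hat_pair, Finset.sum_const_zero, zero_add,
    sum_verlindeSummand_untwisted hSsymm, sum_verlindeSummand_twisted, Finset.sum_div,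
    Finset.mul_sum]

/-- Gauged Verlinde formula for labels `(X,ε)`, `(Ẑ₁,ε₁)`, `(Ẑ₂,ε₂)`:
`N = ½ Σ_W S_{XW}²S_{Z₁W}S_{Z₂W}/S_{0W}² + ½ εε₁ε₂ Σ_W S_{XW}P_{Z₁W}P_{Z₂W}/S_{0W}`. -/
theorem gauged_verlinde_diag_hat {I : Type} [LinearOrder I] [Fintype I]
    (one : I) (bar : I → I) (S : Matrix I I ℂ) (d : I → ℝ) (δ : ℝ)
    (θ sqrtθ : I → ℂ) (η : ℂ)
    (hbar : ∀ X, bar (bar X) = X) (hbar1 : bar one = one)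
    (hSsymm : S.IsSymm)
    (hd : ∀ X, 0 < d X) (hS1 : ∀ X, S one X = (d X : ℂ))
    (hδ : 0 < δ) (hδ2 : δ ^ 2 = ∑ X, d X ^ 2)
    (hunit : S * S.conjTranspose = ((δ : ℂ) ^ 2) • 1)
    (hθ1 : θ one = 1) (hθbar : ∀ X, θ (bar X) = θ X) (hθne : ∀ X, θ X ≠ 0)
    (hη_def : η = (∑ X, θ X * (d X : ℂ) ^ 2) / (δ : ℂ))
    (hηabs : ‖η‖ = 1)
    (hs4 : S ^ 4 = ((δ : ℂ) ^ 4) • 1)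
    (hst3 : (S * Matrix.diagonal θ) ^ 3 = (η⁻¹ * (δ : ℂ)) • S ^ 2)
    (hsqθ : ∀ X, sqrtθ X ^ 2 = θ X) (hsqθbar : ∀ X, sqrtθ (bar X) = sqrtθ X) :
    ∀ (X Z₁ Z₂ : I) (ε ε₁ ε₂ : Bool),
      ∑ ℓ : GLabel I,
          gaugedS S θ sqrtθ (δ : ℂ) η (Sum.inr (Sum.inl (X, ε))) ℓ *
          gaugedS S θ sqrtθ (δ : ℂ) η (Sum.inr (Sum.inr (Z₁, ε₁))) ℓ *
          gaugedS S θ sqrtθ (δ : ℂ) η (Sum.inr (Sum.inr (Z₂, ε₂))) ℓ /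
          ((2 * (δ : ℂ) ^ 2) ^ 2 *
            gaugedS S θ sqrtθ (δ : ℂ) η ℓ (Sum.inr (Sum.inl (one, true))))
      = (∑ W, (S X W / (δ : ℂ)) ^ 2 * (S Z₁ W / (δ : ℂ)) * (S Z₂ W / (δ : ℂ)) /
            (S one W / (δ : ℂ)) ^ 2) / 2
        + sg ε * sg ε₁ * sg ε₂ *
          (∑ W, (S X W / (δ : ℂ)) * bantayP S θ sqrtθ (δ : ℂ) η Z₁ W *
            bantayP S θ sqrtθ (δ : ℂ) η Z₂ W / (S one W / (δ : ℂ))) / 2 :=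
  gauged_verlinde_diag_hat_general one S δ θ sqrtθ η hSsymm
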